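/- arXiv:0812.2687 — 2 statements merged into one kernel-verified Lean document; each statement's English description precedes it below -/
import Mathlib

section
/- Let f be the formal power series over ℚ given by f = Σ_{k≥0} X^{2k+1} (equivalently f·(1 − X²) = X), and let u be the compositional inverse of f (the unique power series with zero constant term and f(u(X)) = X). Then for every k ≥ 0, the coefficient of X^{2k+1} in u equals (−1)ᵏ · Catalan(k), and all even-degree coefficients of u are 0. In particular u = X − X³ + 2X⁵ − 5X⁷ + 14X⁹ − ⋯. -/
/-!
Substituting `u` is a ring homomorphism, so applying it to `f * (1 - X²) = X` gives
`X * (1 - u²) = u`. This equation has at most one solution: for two solutions `u, v`,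
`(u - v) * (1 + X * (u + v)) = 0` and the second factor is a unit. The Catalan series
`C = 1 + X * C²` shows that `X * C(-X²) = ∑ₖ (-1)ᵏ Catalan(k) X^(2k+1)` is a solution.
-/

open PowerSeries

/-- Composition `f ∘ u` of formal power series (intended for `u` with zero
constant coefficient). -/
noncomputable def PowerSeries.compose (f u : PowerSeries ℚ) : PowerSeries ℚ :=
  PowerSeries.mk fun n =>
    PowerSeries.coeff n (Polynomial.aeval u (PowerSeries.trunc (n + 1) f))

namespace PowerSeries

theorem coeff_pow_eq_zero_of_lt {R : Type*} [CommSemiring R] {u : R⟦X⟧}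
    (hu : constantCoeff u = 0) {n d : ℕ} (h : n < d) : coeff n (u ^ d) = 0 :=
  coeff_of_lt_order n <| (Nat.cast_lt.mpr h).trans_le (le_order_pow_of_constantCoeff_eq_zero d hu)

theorem coeff_compose (f u : ℚ⟦X⟧) (n : ℕ) :
    coeff n (f.compose u) = ∑ d ∈ Finset.range (n + 1), coeff d f * coeff n (u ^ d) := by
  simp only [compose, coeff_mk, Polynomial.aeval_def, eval₂_trunc_eq_sum_range, algebraMap_eq,
    map_sum, coeff_C_mul]

theorem compose_eq_subst {f u : ℚ⟦X⟧} (hu : constantCoeff u = 0) : f.compose u = f.subst u := by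
  ext n
  rw [coeff_compose, coeff_subst' (HasSubst.of_constantCoeff_zero' hu)]
  refine (finsum_eq_sum_of_support_subset _ fun d hd => ?_).symm
  simp only [Function.mem_support, Finset.coe_range, Set.mem_Iio] at hd ⊢
  by_contra! h
  exact hd (by rw [coeff_pow_eq_zero_of_lt hu (Nat.lt_of_succ_le h), mul_zero])

theorem X_mul_one_sub_sq_eq_of_compose_eq_X {f u : ℚ⟦X⟧} (hf : f * (1 - X ^ 2) = X)
    (hu : constantCoeff u = 0) (hinv : f.compose u = X) : X * (1 - u ^ 2) = u := by
  have hsubst := HasSubst.of_constantCoeff_zero' hu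
  have h := congrArg (substAlgHom hsubst (R := ℚ)) hf
  rwa [map_mul, map_sub, map_one, map_pow, coe_substAlgHom, subst_X hsubst,
    ← compose_eq_subst hu, hinv] at h

theorem eq_of_X_mul_one_sub_sq_eq {R : Type*} [CommRing R] {u v : R⟦X⟧}
    (hu : X * (1 - u ^ 2) = u) (hv : X * (1 - v ^ 2) = v) : u = v := by
  have hfactor : (u - v) * (1 + X * (u + v)) = 0 := by linear_combination hv - hu
  have hunit : IsUnit (1 + X * (u + v)) := by simp [isUnit_iff_constantCoeff]
  exact sub_eq_zero.mp (hunit.mul_left_eq_zero.mp hfactor)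

/-- The Catalan series evaluated at `-X²`. -/
noncomputable def catalanSeriesNegSq : ℚ⟦X⟧ :=
  ((catalanSeries.map (Nat.castRingHom ℚ)).rescale (-1)).subst (X ^ 2)

theorem coeff_catalanSeriesNegSq (n : ℕ) :
    coeff n catalanSeriesNegSq = if 2 ∣ n then (-1 : ℚ) ^ (n / 2) * catalan (n / 2) else 0 := by
  simp [catalanSeriesNegSq, coeff_rescale]

theorem one_sub_X_sq_mul_catalanSeriesNegSq_sq :
    1 - X ^ 2 * catalanSeriesNegSq ^ 2 = catalanSeriesNegSq := by
  have hsubst : HasSubst (X ^ 2 : ℚ⟦X⟧) := HasSubst.X_pow two_ne_zero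
  have hrescale := congrArg (rescale (-1 : ℚ) ∘ map (Nat.castRingHom ℚ))
    catalanSeries_sq_mul_X_add_one
  simp only [Function.comp_apply, map_add, map_mul, map_pow, map_X, map_one, rescale_X, map_neg,
    neg_one_mul] at hrescale
  have h := congrArg (substAlgHom hsubst) hrescale
  simp only [map_add, map_mul, map_pow, map_neg, map_one, substAlgHom_X, coe_substAlgHom] at h
  rw [catalanSeriesNegSq]
  linear_combination h

theorem X_mul_one_sub_sq_X_mul_catalanSeriesNegSq :
    X * (1 - (X * catalanSeriesNegSq) ^ 2) = X * catalanSeriesNegSq := by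
  rw [mul_pow, one_sub_X_sq_mul_catalanSeriesNegSq_sq]

end PowerSeries

theorem stmt3_general (f u : PowerSeries ℚ)
    (hf : f * (1 - X ^ 2) = X)
    (hu0 : constantCoeff u = 0)
    (hinv : PowerSeries.compose f u = X) :
    (∀ k : ℕ, coeff (2 * k + 1) u = (-1 : ℚ) ^ k * catalan k) ∧
    (∀ k : ℕ, coeff (2 * k) u = 0) := by
  obtain rfl : u = X * catalanSeriesNegSq :=
    eq_of_X_mul_one_sub_sq_eq (X_mul_one_sub_sq_eq_of_compose_eq_X hf hu0 hinv)
      X_mul_one_sub_sq_X_mul_catalanSeriesNegSq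
  refine ⟨fun k => ?_, fun k => ?_⟩
  · simp [coeff_succ_X_mul, coeff_catalanSeriesNegSq]
  · cases k with
    | zero => simp
    | succ k =>
      rw [show 2 * (k + 1) = 2 * k + 1 + 1 by ring, coeff_succ_X_mul, coeff_catalanSeriesNegSq]
      simp

theorem stmt3 (f u : PowerSeries ℚ)
    (hf : f * (1 - X ^ 2) = X)
    (hu0 : constantCoeff u = 0)
    (hinv : PowerSeries.compose f u = X)
    (huniq : ∀ u' : PowerSeries ℚ, constantCoeff u' = 0 →
      PowerSeries.compose f u' = X → u' = u) :
    (∀ k : ℕ, coeff (2 * k + 1) u = (-1 : ℚ) ^ k * catalan k) ∧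
    (∀ k : ℕ, coeff (2 * k) u = 0) :=
  stmt3_general f u hf hu0 hinv
end

section
/- Let f = Σ_{k≥0} X^{2k+1} ∈ ℚ⟦X⟧ and let u be its compositional inverse. Then the absolute value of the coefficient of X⁷ in u equals 5, which is different from 4. (Hence the sequence |coefficients of u| does not match the sequence 1, 1, 2, 4, 5, 6, 7, … of dimensions of homogeneous components of the free ternary partially associative algebra on one generator.) -/
/-!
Since `u` has no constant term, `compose f u` is the substitution `f ∘ u`, and substituting `u`
into `f * (1 - X ^ 2) = X` gives `u = X - X * u ^ 2`. A solution of this equation modulo `X ^ N`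
agrees with `u` modulo `X ^ N`, because the difference of two approximate solutions gains a factor
`X` at each step. The polynomial `X - X ^ 3 + 2 X ^ 5 - 5 X ^ 7` (signed Catalan numbers) solves it
modulo `X ^ 8`, so the coefficient of `X ^ 7` in `u` is `-5`.
-/

open PowerSeries

theorem pow_dvd_sub_of_eq_sub_mul_sq {R : Type*} [CommRing R] {x u v : R} {N : ℕ}
    (hu : u = x - x * u ^ 2) (hv : x ^ N ∣ v - (x - x * v ^ 2)) : x ^ N ∣ u - v := by
  suffices ∀ k ≤ N, x ^ k ∣ u - v from this N le_rfl
  intro k hk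
  induction k with
  | zero => rw [pow_zero]; exact one_dvd _
  | succ k ih =>
    have hsplit : u - v = -(x * (u - v) * (u + v)) - (v - (x - x * v ^ 2)) := by
      linear_combination hu
    rw [hsplit]
    refine dvd_sub ?_ ((pow_dvd_pow x hk).trans hv)
    rw [pow_succ']
    exact ((mul_dvd_mul_left x (ih (by omega))).mul_right _).neg_right

theorem PowerSeries.coeff_eq_of_X_pow_dvd_sub {R : Type*} [Ring R] {φ ψ : R⟦X⟧} {N m : ℕ}
    (h : X ^ N ∣ φ - ψ) (hm : m < N) : coeff m φ = coeff m ψ :=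
  sub_eq_zero.mp (by rw [← map_sub]; exact X_pow_dvd_iff.mp h m hm)

theorem PowerSeries.compose_eq_subst_s4 {f u : ℚ⟦X⟧} (hu : constantCoeff u = 0) :
    f.compose u = f.subst u := by
  ext n
  rw [compose, coeff_mk, coeff_subst' (HasSubst.of_constantCoeff_zero' hu),
    finsum_eq_sum_of_support_subset (s := Finset.range (n + 1)), Polynomial.aeval_def,
    eval₂_trunc_eq_sum_range, map_sum]
  · simp
  · intro d hd
    rw [Finset.coe_range, Set.mem_Iio]
    by_contra! hnd
    refine (Function.mem_support.mp hd) ?_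
    rw [X_pow_dvd_iff.mp (pow_dvd_pow_of_dvd (X_dvd_iff.mpr hu) d) n (by omega), smul_zero]

theorem PowerSeries.eq_X_sub_X_mul_sq_of_compose_eq_X {f u : ℚ⟦X⟧} (hf : f * (1 - X ^ 2) = X)
    (hu : constantCoeff u = 0) (hinv : f.compose u = X) : u = X - X * u ^ 2 := by
  have h := congrArg (substAlgHom (HasSubst.of_constantCoeff_zero' hu)) hf
  rw [map_mul, map_sub, map_one, map_pow, substAlgHom_X, coe_substAlgHom,
    ← compose_eq_subst_s4 hu, hinv] at h
  linear_combination -h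

theorem stmt4 (f u : PowerSeries ℚ)
    (hf : f * (1 - X ^ 2) = X)
    (hu0 : constantCoeff u = 0)
    (hinv : PowerSeries.compose f u = X) :
    |coeff 7 u| = 5 ∧ (5 : ℚ) ≠ 4 := by
  have hu : u = X - X * u ^ 2 := eq_X_sub_X_mul_sq_of_compose_eq_X hf hu0 hinv
  set v : ℚ⟦X⟧ := X - X ^ 3 + 2 * X ^ 5 - 5 * X ^ 7
  have hv : X ^ 8 ∣ v - (X - X * v ^ 2) :=
    ⟨X * (-14 + 14 * X ^ 2 - 20 * X ^ 4 + 25 * X ^ 6), by ring⟩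
  have h7 : coeff 7 u = -5 := by
    rw [coeff_eq_of_X_pow_dvd_sub (pow_dvd_sub_of_eq_sub_mul_sq hu hv) (by norm_num)]
    simp [v, coeff_X_pow, coeff_X, ← map_ofNat C, coeff_C_mul]
  rw [h7]
  norm_num
end
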